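/- Let (C, ⊗, I) be a small strict tensor category which is k-linear abelian, and let (F, Id_I, F₂) be a k-linear tensor functor F : C → Vect_k^f with all F(X) finite-dimensional, where F₂ : F(X) ⊗ F(Y) → F(X ⊗ Y) are the natural coherence isomorphisms. Fix a realization {i_X} of Coend(F) and write S̄ = i_X(S). Define m : Coend(F) ⊗ Coend(F) → Coend(F) by m(S̄ ⊗ T̄) = i_{X⊗Y}(F₂ ∘ (S ⊗ T) ∘ F₂^{-1}) for S ∈ End_k(F(X)), T ∈ End_k(F(Y)), and η : k → Coend(F) by η = i_I (identifying Hom_k(F(I),F(I)) = Hom_k(k,k) = k). Then m is well-defined and associative with unit η, and (Coend(F), Δ, ε, m, η) is a bialgebra, where (Δ, ε) is the coalgebra structure induced from the comatrix coalgebras. -/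

import Mathlib

/-!
The multiplication comes from the universal property of the coend applied twice: for fixed `X`
and `S` the family `T ↦ i_{X⊗Y}(F₂ (S ⊗ T) F₂⁻¹)` is dinatural in `Y` by naturality of `F₂`, and
the maps so obtained are again dinatural in `X`. Dinaturality makes `i` invariant under
conjugation by `F` of an isomorphism, and `F(α)`, `F(λ)`, `F(ρ)` intertwine the conjugated tensor
products by the coherence of `(F, F₀, F₂)`; this gives associativity and the unit laws.

For the coalgebra laws, the comatrix comultiplication of `S ∈ End(M)` is characterised without
bases as the element of `End(M) ⊗ End(M)` acting on `M ⊗ M` by `x ⊗ y ↦ y ⊗ S x`. This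
description is visibly compatible with conjugation and tensor products, and the counit is the
trace, which is multiplicative on tensor products. Since `F(I) ≅ k` is a line, `Δ` and `ε` send
`η = i_I(id)` to `η ⊗ η` and `1`.
-/

open CategoryTheory TensorProduct MonoidalCategory Functor.LaxMonoidal Functor.OplaxMonoidal

noncomputable section
universe w₁ w₂ u
variable (k : Type) [Field k]

def smulRightL {M : Type} [AddCommGroup M] [Module k M] (x : M) :
    (M →ₗ[k] k) →ₗ[k] (M →ₗ[k] M) where
  toFun f := f.smulRight x
  map_add' f g := by ext y; simp [add_smul]
  map_smul' c f := by ext y; simp [smul_smul]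

/-- The comatrix comultiplication on `Hom_k(M,M)`; the counit is the trace. -/
def comatrixComul (M : Type) [AddCommGroup M] [Module k M] [Module.Finite k M] :
    (M →ₗ[k] M) →ₗ[k] ((M →ₗ[k] M) ⊗[k] (M →ₗ[k] M)) :=
  let b := Module.Free.chooseBasis k M
  ∑ i, ∑ l,
    ((TensorProduct.mk k (M →ₗ[k] M) (M →ₗ[k] M)).flip ((b.coord l).smulRight (b i))) ∘ₗ
      (smulRightL k (b l)) ∘ₗ (LinearMap.llcomp k M M k (b.coord i))

section HomTensorHom

variable {R M N : Type*} [CommSemiring R] [AddCommMonoid M] [Module R M] [AddCommMonoid N]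
  [Module R N]

theorem homTensorHomMap_comp_map_conj (e : M ≃ₗ[R] N) :
    homTensorHomMap (.id R) N N N N ∘ₗ TensorProduct.map e.conj.toLinearMap e.conj.toLinearMap
      = (TensorProduct.congr e e).conj.toLinearMap ∘ₗ homTensorHomMap (.id R) M M M M :=
  TensorProduct.ext' fun _ _ => TensorProduct.ext' fun _ _ => by simp [LinearEquiv.conj_apply]

theorem homTensorHomMap_comp_map_homTensorHomMap :
    homTensorHomMap (.id R) (M ⊗[R] N) (M ⊗[R] N) (M ⊗[R] N) (M ⊗[R] N) ∘ₗ
        TensorProduct.map (homTensorHomMap (.id R) M N M N) (homTensorHomMap (.id R) M N M N) ∘ₗ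
        (tensorTensorTensorComm R (M →ₗ[R] M) (M →ₗ[R] M) (N →ₗ[R] N) (N →ₗ[R] N)).toLinearMap
      = (tensorTensorTensorComm R M N M N).symm.conj.toLinearMap ∘ₗ
          homTensorHomMap (.id R) (M ⊗[R] M) (N ⊗[R] N) (M ⊗[R] M) (N ⊗[R] N) ∘ₗ
          TensorProduct.map (homTensorHomMap (.id R) M M M M) (homTensorHomMap (.id R) N N N N) :=
  TensorProduct.ext_fourfold' fun _ _ _ _ => TensorProduct.ext_fourfold' fun _ _ _ _ => by
    simp [LinearEquiv.conj_apply]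

end HomTensorHom

section Comatrix

variable {k} {M N : Type} [AddCommGroup M] [Module k M] [Module.Finite k M] [AddCommGroup N]
  [Module k N] [Module.Finite k N]

theorem homTensorHomMap_comatrixComul (S : M →ₗ[k] M) :
    homTensorHomMap (.id k) M M M M (comatrixComul k M S)
      = (TensorProduct.comm k M M).toLinearMap ∘ₗ TensorProduct.map S LinearMap.id := by
  refine TensorProduct.ext' fun x y => ?_
  simp only [comatrixComul, smulRightL, LinearMap.coe_sum, LinearMap.coe_comp, LinearMap.coe_mk,
    AddHom.coe_mk, Finset.sum_apply, Function.comp_apply, LinearMap.flip_apply, mk_apply, map_sum,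
    homTensorHomMap_apply, map_tmul, LinearMap.coe_smulRight, LinearMap.llcomp_apply,
    Module.Basis.coord_apply, tmul_smul, LinearEquiv.coe_coe, LinearMap.id_coe, id_eq, comm_tmul]
  set b := Module.Free.chooseBasis k M
  simp_rw [TensorProduct.smul_tmul', smul_comm (b.repr y _), ← TensorProduct.sum_tmul,
    ← Finset.smul_sum, b.sum_repr, TensorProduct.smul_tmul, ← TensorProduct.tmul_sum, b.sum_repr]

theorem eq_comatrixComul_of_homTensorHomMap {S : M →ₗ[k] M}
    {z : (M →ₗ[k] M) ⊗[k] (M →ₗ[k] M)}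
    (hz : homTensorHomMap (.id k) M M M M z
      = (TensorProduct.comm k M M).toLinearMap ∘ₗ TensorProduct.map S LinearMap.id) :
    z = comatrixComul k M S := by
  apply (homTensorHomEquiv k M M M M).injective
  rw [homTensorHomEquiv_apply, homTensorHomEquiv_apply, hz, homTensorHomMap_comatrixComul]

theorem comatrixComul_conj (e : M ≃ₗ[k] N) (S : M →ₗ[k] M) :
    comatrixComul k N (e.conj S)
      = TensorProduct.map e.conj.toLinearMap e.conj.toLinearMap (comatrixComul k M S) := by
  refine (eq_comatrixComul_of_homTensorHomMap ?_).symm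
  rw [← LinearMap.comp_apply, homTensorHomMap_comp_map_conj, LinearMap.comp_apply,
    homTensorHomMap_comatrixComul]
  exact TensorProduct.ext' fun _ _ => by simp [LinearEquiv.conj_apply]

theorem comatrixComul_map (S : M →ₗ[k] M) (T : N →ₗ[k] N) :
    comatrixComul k (M ⊗[k] N) (TensorProduct.map S T)
      = TensorProduct.map (homTensorHomMap (.id k) M N M N) (homTensorHomMap (.id k) M N M N)
          (tensorTensorTensorComm k _ _ _ _ (comatrixComul k M S ⊗ₜ comatrixComul k N T)) := by
  refine (eq_comatrixComul_of_homTensorHomMap ?_).symm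
  have h := LinearMap.congr_fun homTensorHomMap_comp_map_homTensorHomMap
    (comatrixComul k M S ⊗ₜ[k] comatrixComul k N T)
  simp only [LinearMap.comp_apply, LinearEquiv.coe_coe, TensorProduct.map_tmul] at h
  rw [h, homTensorHomMap_comatrixComul, homTensorHomMap_comatrixComul]
  exact TensorProduct.ext_fourfold' fun _ _ _ _ => by simp [LinearEquiv.conj_apply]

theorem comatrixComul_id_of_finrank_eq_one (h : Module.finrank k M = 1) :
    comatrixComul k M LinearMap.id = LinearMap.id ⊗ₜ LinearMap.id := by
  obtain ⟨v, -, hv⟩ := finrank_eq_one_iff'.mp h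
  refine (eq_comatrixComul_of_homTensorHomMap (TensorProduct.ext' fun x y => ?_)).symm
  obtain ⟨a, rfl⟩ := hv x
  obtain ⟨b, rfl⟩ := hv y
  simp [TensorProduct.smul_tmul', TensorProduct.tmul_smul, smul_smul, mul_comm]

end Comatrix

section TensorConj

variable {k} {C' : Type*} [Category C'] [MonoidalCategory C'] (G : C' ⥤ ModuleCat k) [G.Monoidal]

/-- The paper's `F₂ ∘ (S ⊗ T) ∘ F₂⁻¹`, allowing `S` and `T` to change the object. -/
def tensorConj {X X' Y Y' : C'} :
    (G.obj X →ₗ[k] G.obj X') →ₗ[k] (G.obj Y →ₗ[k] G.obj Y') →ₗ[k]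
      (G.obj (X ⊗ Y) →ₗ[k] G.obj (X' ⊗ Y')) :=
  (TensorProduct.mapBilinear (.id k) _ _ _ _).compr₂
    (LinearMap.llcomp k _ _ _ (μ G X' Y').hom ∘ₗ LinearMap.lcomp k _ (δ G X Y).hom)

def μEquiv (X Y : C') : (G.obj X ⊗[k] G.obj Y) ≃ₗ[k] G.obj (X ⊗ Y) :=
  (Functor.Monoidal.μIso G X Y).toLinearEquiv

variable {G}

theorem tensorConj_eq_hom {X X' Y Y' : C'} (S : G.obj X →ₗ[k] G.obj X')
    (T : G.obj Y →ₗ[k] G.obj Y') :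
    tensorConj G S T = (δ G X Y ≫ (ModuleCat.ofHom S ⊗ₘ ModuleCat.ofHom T) ≫ μ G X' Y').hom :=
  rfl

theorem tensorConj_eq_conj {X Y : C'} (S : G.obj X →ₗ[k] G.obj X) (T : G.obj Y →ₗ[k] G.obj Y) :
    tensorConj G S T = (μEquiv G X Y).conj (TensorProduct.map S T) :=
  rfl

theorem lift_tensorConj (X Y : C') :
    TensorProduct.lift (tensorConj G (X := X) (X' := X) (Y := Y) (Y' := Y))
      = (μEquiv G X Y).conj.toLinearMap ∘ₗ
          homTensorHomMap (.id k) (G.obj X) (G.obj Y) (G.obj X) (G.obj Y) :=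
  TensorProduct.ext' fun _ _ => rfl

theorem tensorConj_comp {X X' X'' Y Y' Y'' : C'} (S : G.obj X →ₗ[k] G.obj X')
    (S' : G.obj X' →ₗ[k] G.obj X'') (T : G.obj Y →ₗ[k] G.obj Y')
    (T' : G.obj Y' →ₗ[k] G.obj Y'') :
    tensorConj G (S' ∘ₗ S) (T' ∘ₗ T) = tensorConj G S' T' ∘ₗ tensorConj G S T := by
  simp only [tensorConj_eq_hom, ← ModuleCat.hom_comp]
  congr 1
  simp

theorem tensorConj_map_id {X X' : C'} (f : X ⟶ X') (Y : C') :
    tensorConj G (G.map f).hom LinearMap.id = (G.map (f ▷ Y)).hom := by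
  rw [tensorConj_eq_hom, Functor.Monoidal.map_whiskerRight]
  simp

theorem tensorConj_id_map (X : C') {Y Y' : C'} (f : Y ⟶ Y') :
    tensorConj G LinearMap.id (G.map f).hom = (G.map (X ◁ f)).hom := by
  rw [tensorConj_eq_hom, Functor.Monoidal.map_whiskerLeft]
  simp

theorem map_associator_comp_tensorConj {X X' Y Y' Z Z' : C'} (S : G.obj X →ₗ[k] G.obj X')
    (T : G.obj Y →ₗ[k] G.obj Y') (R : G.obj Z →ₗ[k] G.obj Z') :
    (G.map (α_ X' Y' Z').hom).hom ∘ₗ tensorConj G (tensorConj G S T) R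
      = tensorConj G S (tensorConj G T R) ∘ₗ (G.map (α_ X Y Z).hom).hom := by
  simp only [tensorConj_eq_hom, ← ModuleCat.hom_comp]
  congr 1
  rw [Functor.Monoidal.map_associator, Functor.Monoidal.map_associator]
  simp only [ModuleCat.ofHom_hom, Category.assoc, Functor.Monoidal.μ_δ_assoc, ← tensorHom_id,
    ← id_tensorHom, tensorHom_comp_tensorHom_assoc, Category.comp_id, Category.id_comp,
    Functor.Monoidal.μ_δ]
  rw [← Category.comp_id (ModuleCat.ofHom S), ← tensorHom_comp_tensorHom, Category.assoc,
    ← associator_naturality_assoc]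
  simp only [tensorHom_comp_tensorHom_assoc, Category.comp_id, Category.id_comp]

theorem map_leftUnitor_comp_tensorConj {X X' : C'} (S : G.obj X →ₗ[k] G.obj X') :
    (G.map (λ_ X').hom).hom ∘ₗ tensorConj G LinearMap.id S = S ∘ₗ (G.map (λ_ X).hom).hom := by
  rw [tensorConj_eq_hom, ← ModuleCat.hom_comp]
  conv_rhs => rw [← ModuleCat.hom_ofHom S, ← ModuleCat.hom_comp]
  congr 1
  rw [Functor.Monoidal.map_leftUnitor, Functor.Monoidal.map_leftUnitor]
  simp only [Category.assoc, Functor.Monoidal.μ_δ_assoc, ModuleCat.ofHom_id,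
    MonoidalCategory.tensorHom_def, id_whiskerRight, Category.id_comp]
  rw [whisker_exchange_assoc, leftUnitor_naturality]

theorem map_rightUnitor_comp_tensorConj {X X' : C'} (S : G.obj X →ₗ[k] G.obj X') :
    (G.map (ρ_ X').hom).hom ∘ₗ tensorConj G S LinearMap.id = S ∘ₗ (G.map (ρ_ X).hom).hom := by
  rw [tensorConj_eq_hom, ← ModuleCat.hom_comp]
  conv_rhs => rw [← ModuleCat.hom_ofHom S, ← ModuleCat.hom_comp]
  congr 1
  rw [Functor.Monoidal.map_rightUnitor, Functor.Monoidal.map_rightUnitor]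
  simp only [Category.assoc, Functor.Monoidal.μ_δ_assoc, ModuleCat.ofHom_id,
    MonoidalCategory.tensorHom_def, whiskerLeft_id, Category.comp_id]
  rw [← whisker_exchange_assoc, rightUnitor_naturality]

theorem trace_tensorConj {X Y : C'} [Module.Finite k (G.obj X)] [Module.Finite k (G.obj Y)]
    (S : G.obj X →ₗ[k] G.obj X) (T : G.obj Y →ₗ[k] G.obj Y) :
    LinearMap.trace k _ (tensorConj G S T) = LinearMap.trace k _ S * LinearMap.trace k _ T := by
  rw [tensorConj_eq_conj, LinearMap.trace_conj', LinearMap.trace_tensorProduct']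

theorem comatrixComul_tensorConj {X Y : C'} [Module.Finite k (G.obj X)]
    [Module.Finite k (G.obj Y)] [Module.Finite k (G.obj (X ⊗ Y))]
    (S : G.obj X →ₗ[k] G.obj X) (T : G.obj Y →ₗ[k] G.obj Y) :
    comatrixComul k _ (tensorConj G S T)
      = TensorProduct.map (TensorProduct.lift (tensorConj G)) (TensorProduct.lift (tensorConj G))
          (tensorTensorTensorComm k _ _ _ _ (comatrixComul k _ S ⊗ₜ comatrixComul k _ T)) := by
  rw [tensorConj_eq_conj, comatrixComul_conj, comatrixComul_map, ← LinearMap.comp_apply,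
    ← TensorProduct.map_comp, lift_tensorConj]

theorem finrank_obj_tensorUnit : Module.finrank k (G.obj (𝟙_ C')) = 1 :=
  (Functor.Monoidal.εIso G).toLinearEquiv.finrank_eq.symm.trans (Module.finrank_self k)

variable {U : Type*} [AddCommGroup U] [Module k U] {i : ∀ X : C', (G.obj X →ₗ[k] G.obj X) →ₗ[k] U}

theorem comul_apply_id_tensorUnit [∀ X, Module.Finite k (G.obj X)] {Δ : U →ₗ[k] U ⊗[k] U}
    (hΔ : ∀ X, Δ ∘ₗ i X = TensorProduct.map (i X) (i X) ∘ₗ comatrixComul k (G.obj X)) :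
    Δ (i (𝟙_ C') LinearMap.id) = i (𝟙_ C') LinearMap.id ⊗ₜ i (𝟙_ C') LinearMap.id := by
  rw [← LinearMap.comp_apply, hΔ, LinearMap.comp_apply,
    comatrixComul_id_of_finrank_eq_one finrank_obj_tensorUnit, TensorProduct.map_tmul]

theorem counit_apply_id_tensorUnit {ε : U →ₗ[k] k}
    (hε : ∀ X, ε ∘ₗ i X = LinearMap.trace k (G.obj X)) :
    ε (i (𝟙_ C') LinearMap.id) = 1 := by
  have := Module.finite_of_finrank_eq_succ (finrank_obj_tensorUnit (G := G))
  rw [← LinearMap.comp_apply, hε, LinearMap.trace_id, finrank_obj_tensorUnit, Nat.cast_one]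

end TensorConj

variable (C : Type u) [SmallCategory C] [MonoidalCategory C] [Preadditive C]
  [CategoryTheory.Linear k C] [Abelian C]
variable (F : C ⥤ ModuleCat k) [F.Monoidal] [F.Additive] [F.Linear k]

/-- Dinaturality of a family of maps `Hom_k(F X, F X) → U`. -/
def DinatC (U : Type w₁) [AddCommGroup U] [Module k U]
    (i : ∀ X : C, (F.obj X →ₗ[k] F.obj X) →ₗ[k] U) : Prop :=
  ∀ (X Y : C) (f : Y ⟶ X) (S : F.obj X →ₗ[k] F.obj Y),
    i X (((F.map f).hom : F.obj Y →ₗ[k] F.obj X) ∘ₗ S)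
      = i Y (S ∘ₗ ((F.map f).hom : F.obj Y →ₗ[k] F.obj X))

/-- `(U, i)` is a realization of `Coend(F)`. -/
def IsCoendRealization (U : Type w₁) [AddCommGroup U] [Module k U]
    (i : ∀ X : C, (F.obj X →ₗ[k] F.obj X) →ₗ[k] U) : Prop :=
  DinatC k C F U i ∧
  ∀ (V : Type w₂) [AddCommGroup V] [Module k V]
    (j : ∀ X : C, (F.obj X →ₗ[k] F.obj X) →ₗ[k] V), DinatC k C F V j →
    ∃! φ : U →ₗ[k] V, ∀ X : C, φ ∘ₗ i X = j X

section Coend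

variable {k} {C' : Type*} [SmallCategory C'] {G : C' ⥤ ModuleCat k}

theorem DinatC.eq_of_map_comp_eq {U : Type*} [AddCommGroup U] [Module k U]
    {i : ∀ X : C', (G.obj X →ₗ[k] G.obj X) →ₗ[k] U} (hd : DinatC k C' G U i) {X Y : C'}
    (e : Y ≅ X) {A : G.obj Y →ₗ[k] G.obj Y} {B : G.obj X →ₗ[k] G.obj X}
    (h : (G.map e.hom).hom ∘ₗ A = B ∘ₗ (G.map e.hom).hom) :
    i Y A = i X B := by
  have hA : A = ((G.map e.inv).hom ∘ₗ B) ∘ₗ (G.map e.hom).hom := by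
    rw [LinearMap.comp_assoc, ← h, ← LinearMap.comp_assoc, ← ModuleCat.hom_comp,
      e.map_hom_inv_id, ModuleCat.hom_id, LinearMap.id_comp]
  rw [hA, ← hd, ← LinearMap.comp_assoc, ← ModuleCat.hom_comp, e.map_inv_hom_id,
    ModuleCat.hom_id, LinearMap.id_comp]

variable {U : Type} [AddCommGroup U] [Module k U] {i : ∀ X : C', (G.obj X →ₗ[k] G.obj X) →ₗ[k] U}

theorem IsCoendRealization.hom_ext (hreal : IsCoendRealization.{0, 0} k C' G U i) {V : Type}
    [AddCommGroup V] [Module k V] {φ ψ : U →ₗ[k] V} (h : ∀ X S, φ (i X S) = ψ (i X S)) :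
    φ = ψ := by
  have hd : DinatC k C' G V fun X => φ ∘ₗ i X := fun X Y f S => congrArg φ (hreal.1 X Y f S)
  obtain ⟨_, -, huniq⟩ := hreal.2 V _ hd
  rw [huniq φ fun _ => rfl, huniq ψ fun X => LinearMap.ext fun S => (h X S).symm]

theorem IsCoendRealization.hom_ext₂ (hreal : IsCoendRealization.{0, 0} k C' G U i) {V : Type}
    [AddCommGroup V] [Module k V] {φ ψ : U ⊗[k] U →ₗ[k] V}
    (h : ∀ X Y S T, φ (i X S ⊗ₜ i Y T) = ψ (i X S ⊗ₜ i Y T)) : φ = ψ :=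
  TensorProduct.ext <| hreal.hom_ext fun X S => hreal.hom_ext fun Y T => h X Y S T

theorem IsCoendRealization.hom_ext₃ (hreal : IsCoendRealization.{0, 0} k C' G U i) {V : Type}
    [AddCommGroup V] [Module k V] {φ ψ : (U ⊗[k] U) ⊗[k] U →ₗ[k] V}
    (h : ∀ X Y Z S T R, φ (i X S ⊗ₜ i Y T ⊗ₜ i Z R) = ψ (i X S ⊗ₜ i Y T ⊗ₜ i Z R)) : φ = ψ :=
  TensorProduct.ext <| hreal.hom_ext₂ fun X Y S T => hreal.hom_ext fun Z R => h X Y Z S T R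

variable [MonoidalCategory C'] [G.Monoidal]

theorem DinatC.tensorConj_left (hd : DinatC k C' G U i) (Z : C') (T : G.obj Z →ₗ[k] G.obj Z) :
    DinatC k C' G U fun X => i (X ⊗ Z) ∘ₗ (tensorConj G).flip T := by
  intro X Y f S
  have h₁ : tensorConj G ((G.map f).hom ∘ₗ S) T = (G.map (f ▷ Z)).hom ∘ₗ tensorConj G S T := by
    rw [← tensorConj_map_id, ← tensorConj_comp, LinearMap.id_comp]
  have h₂ : tensorConj G (S ∘ₗ (G.map f).hom) T = tensorConj G S T ∘ₗ (G.map (f ▷ Z)).hom := by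
    rw [← tensorConj_map_id, ← tensorConj_comp, LinearMap.comp_id]
  simpa only [LinearMap.comp_apply, LinearMap.flip_apply, h₁, h₂] using hd _ _ (f ▷ Z) _

theorem DinatC.tensorConj_right (hd : DinatC k C' G U i) (X : C') (S : G.obj X →ₗ[k] G.obj X) :
    DinatC k C' G U fun Y => i (X ⊗ Y) ∘ₗ tensorConj G S := by
  intro Y Z f T
  have h₁ : tensorConj G S ((G.map f).hom ∘ₗ T) = (G.map (X ◁ f)).hom ∘ₗ tensorConj G S T := by
    rw [← tensorConj_id_map, ← tensorConj_comp, LinearMap.id_comp]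
  have h₂ : tensorConj G S (T ∘ₗ (G.map f).hom) = tensorConj G S T ∘ₗ (G.map (X ◁ f)).hom := by
    rw [← tensorConj_id_map, ← tensorConj_comp, LinearMap.comp_id]
  simpa only [LinearMap.comp_apply, h₁, h₂] using hd _ _ (X ◁ f) _

theorem DinatC.apply_tensorConj_assoc (hd : DinatC k C' G U i) {X Y Z : C'}
    (S : G.obj X →ₗ[k] G.obj X) (T : G.obj Y →ₗ[k] G.obj Y) (R : G.obj Z →ₗ[k] G.obj Z) :
    i ((X ⊗ Y) ⊗ Z) (tensorConj G (tensorConj G S T) R)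
      = i (X ⊗ (Y ⊗ Z)) (tensorConj G S (tensorConj G T R)) :=
  hd.eq_of_map_comp_eq (α_ X Y Z) (map_associator_comp_tensorConj S T R)

theorem DinatC.apply_tensorConj_id_left (hd : DinatC k C' G U i) {X : C'}
    (S : G.obj X →ₗ[k] G.obj X) :
    i (𝟙_ C' ⊗ X) (tensorConj G LinearMap.id S) = i X S :=
  hd.eq_of_map_comp_eq (λ_ X) (map_leftUnitor_comp_tensorConj S)

theorem DinatC.apply_tensorConj_id_right (hd : DinatC k C' G U i) {X : C'}
    (S : G.obj X →ₗ[k] G.obj X) :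
    i (X ⊗ 𝟙_ C') (tensorConj G S LinearMap.id) = i X S :=
  hd.eq_of_map_comp_eq (ρ_ X) (map_rightUnitor_comp_tensorConj S)

namespace IsCoendRealization

theorem exists_mul (hreal : IsCoendRealization.{0, 0} k C' G U i) :
    ∃ m : U ⊗[k] U →ₗ[k] U, ∀ X Y S T, m (i X S ⊗ₜ i Y T) = i (X ⊗ Y) (tensorConj G S T) := by
  have hψ : ∀ X : C', ∃ ψ : U →ₗ[k] (G.obj X →ₗ[k] G.obj X) →ₗ[k] U,
      ∀ Y T S, ψ (i Y T) S = i (X ⊗ Y) (tensorConj G S T) := by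
    intro X
    have hd : DinatC k C' G _ fun Y => (tensorConj G).flip.compr₂ (i (X ⊗ Y)) :=
      fun Y Z f T => LinearMap.ext fun S => hreal.1.tensorConj_right X S Y Z f T
    obtain ⟨ψ, hψ, -⟩ := hreal.2 _ _ hd
    exact ⟨ψ, fun Y T S => LinearMap.congr_fun (LinearMap.congr_fun (hψ Y) T) S⟩
  choose ψ hψ using hψ
  have hd : DinatC k C' G (U →ₗ[k] U) fun X => (ψ X).flip := by
    refine fun X Y f S => hreal.hom_ext fun Z T => ?_
    simpa only [LinearMap.comp_apply, LinearMap.flip_apply, hψ] using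
      hreal.1.tensorConj_left Z T X Y f S
  obtain ⟨Φ, hΦ, -⟩ := hreal.2 _ _ hd
  refine ⟨TensorProduct.lift Φ, fun X Y S T => ?_⟩
  rw [TensorProduct.lift.tmul, ← LinearMap.comp_apply Φ, hΦ, LinearMap.flip_apply, hψ]

variable {m : U ⊗[k] U →ₗ[k] U}

theorem mul_assoc (hreal : IsCoendRealization.{0, 0} k C' G U i)
    (hm : ∀ X Y S T, m (i X S ⊗ₜ i Y T) = i (X ⊗ Y) (tensorConj G S T)) :
    m ∘ₗ TensorProduct.map m LinearMap.id
      = (m ∘ₗ TensorProduct.map LinearMap.id m) ∘ₗ (TensorProduct.assoc k U U U).toLinearMap :=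
  hreal.hom_ext₃ fun X Y Z S T R => by
    simp only [LinearMap.comp_apply, TensorProduct.map_tmul, LinearMap.id_apply,
      LinearEquiv.coe_coe, TensorProduct.assoc_tmul, hm, hreal.1.apply_tensorConj_assoc]

theorem mul_unit_tmul (hreal : IsCoendRealization.{0, 0} k C' G U i)
    (hm : ∀ X Y S T, m (i X S ⊗ₜ i Y T) = i (X ⊗ Y) (tensorConj G S T)) (u : U) :
    m (i (𝟙_ C') LinearMap.id ⊗ₜ u) = u := by
  have h : m ∘ₗ TensorProduct.mk k U U (i (𝟙_ C') LinearMap.id) = LinearMap.id :=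
    hreal.hom_ext fun X S => by
      simp only [LinearMap.comp_apply, TensorProduct.mk_apply, hm,
        hreal.1.apply_tensorConj_id_left, LinearMap.id_apply]
  exact LinearMap.congr_fun h u

theorem mul_tmul_unit (hreal : IsCoendRealization.{0, 0} k C' G U i)
    (hm : ∀ X Y S T, m (i X S ⊗ₜ i Y T) = i (X ⊗ Y) (tensorConj G S T)) (u : U) :
    m (u ⊗ₜ i (𝟙_ C') LinearMap.id) = u := by
  have h : m ∘ₗ (TensorProduct.mk k U U).flip (i (𝟙_ C') LinearMap.id) = LinearMap.id :=
    hreal.hom_ext fun X S => by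
      simp only [LinearMap.comp_apply, LinearMap.flip_apply, TensorProduct.mk_apply, hm,
        hreal.1.apply_tensorConj_id_right, LinearMap.id_apply]
  exact LinearMap.congr_fun h u

theorem comul_comp_mul [∀ X, Module.Finite k (G.obj X)]
    (hreal : IsCoendRealization.{0, 0} k C' G U i)
    (hm : ∀ X Y S T, m (i X S ⊗ₜ i Y T) = i (X ⊗ Y) (tensorConj G S T)) {Δ : U →ₗ[k] U ⊗[k] U}
    (hΔ : ∀ X, Δ ∘ₗ i X = TensorProduct.map (i X) (i X) ∘ₗ comatrixComul k (G.obj X)) :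
    Δ ∘ₗ m = TensorProduct.map m m ∘ₗ (tensorTensorTensorComm k U U U U).toLinearMap ∘ₗ
      TensorProduct.map Δ Δ := by
  refine hreal.hom_ext₂ fun X Y S T => ?_
  have hL : i (X ⊗ Y) ∘ₗ TensorProduct.lift (tensorConj G) = m ∘ₗ TensorProduct.map (i X) (i Y) :=
    TensorProduct.ext' fun S T => (hm X Y S T).symm
  have hcomm := LinearMap.congr_fun
    (TensorProduct.tensorTensorTensorComm_comp_map (f := i X) (g := i X) (h := i Y) (j := i Y))
    (comatrixComul k _ S ⊗ₜ comatrixComul k _ T)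
  calc Δ (m (i X S ⊗ₜ i Y T))
      = TensorProduct.map (i (X ⊗ Y)) (i (X ⊗ Y)) (comatrixComul k _ (tensorConj G S T)) := by
        rw [hm, ← LinearMap.comp_apply, hΔ, LinearMap.comp_apply]
    _ = TensorProduct.map m m (TensorProduct.map (TensorProduct.map (i X) (i Y))
          (TensorProduct.map (i X) (i Y)) (tensorTensorTensorComm k _ _ _ _
            (comatrixComul k _ S ⊗ₜ comatrixComul k _ T))) := by
        rw [comatrixComul_tensorConj, ← LinearMap.comp_apply, ← TensorProduct.map_comp, hL,
          TensorProduct.map_comp, LinearMap.comp_apply]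
    _ = _ := by
        simp only [LinearMap.comp_apply, LinearEquiv.coe_coe, TensorProduct.map_tmul] at hcomm ⊢
        rw [← hcomm, ← LinearMap.comp_apply Δ, hΔ, ← LinearMap.comp_apply Δ, hΔ]
        rfl

theorem counit_comp_mul [∀ X, Module.Finite k (G.obj X)]
    (hreal : IsCoendRealization.{0, 0} k C' G U i)
    (hm : ∀ X Y S T, m (i X S ⊗ₜ i Y T) = i (X ⊗ Y) (tensorConj G S T)) {ε : U →ₗ[k] k}
    (hε : ∀ X, ε ∘ₗ i X = LinearMap.trace k (G.obj X)) :
    ε ∘ₗ m = (TensorProduct.lid k k).toLinearMap ∘ₗ TensorProduct.map ε ε :=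
  hreal.hom_ext₂ fun X Y S T => by
    simp only [LinearMap.comp_apply, TensorProduct.map_tmul, LinearEquiv.coe_coe, hm,
      TensorProduct.lid_tmul, smul_eq_mul, ← LinearMap.comp_apply ε, hε, trace_tensorConj]

end IsCoendRealization

end Coend

theorem coend_bialgebra
    (hfd : ∀ X : C, FiniteDimensional k (F.obj X))
    -- a realization of Coend(F) with its induced coalgebra structure:
    (U : Type) [AddCommGroup U] [Module k U]
    (i : ∀ X : C, (F.obj X →ₗ[k] F.obj X) →ₗ[k] U)
    (hreal : IsCoendRealization.{0, 0} k C F U i)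
    (Δ : U →ₗ[k] U ⊗[k] U) (ε : U →ₗ[k] k)
    (hΔ : ∀ X : C, haveI := hfd X;
      Δ ∘ₗ i X = (TensorProduct.map (i X) (i X)) ∘ₗ comatrixComul k (F.obj X))
    (hε : ∀ X : C, ε ∘ₗ i X = LinearMap.trace k (F.obj X)) :
    ∃ m : U ⊗[k] U →ₗ[k] U,
      -- m is well defined by the formula m(i_X S ⊗ i_Y T) = i_{X⊗Y}(F₂ (S⊗T) F₂⁻¹):
      (∀ (X Y : C) (S : F.obj X →ₗ[k] F.obj X) (T : F.obj Y →ₗ[k] F.obj Y),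
        m (i X S ⊗ₜ[k] i Y T)
          = i (X ⊗ Y) (((μ F X Y).hom : (F.obj X ⊗[k] F.obj Y) →ₗ[k] F.obj (X ⊗ Y)) ∘ₗ
              (TensorProduct.map S T) ∘ₗ
              ((δ F X Y).hom : F.obj (X ⊗ Y) →ₗ[k] (F.obj X ⊗[k] F.obj Y)))) ∧
      -- associativity:
      (m ∘ₗ TensorProduct.map m LinearMap.id
        = (m ∘ₗ TensorProduct.map LinearMap.id m) ∘ₗ
            (TensorProduct.assoc k U U U).toLinearMap) ∧
      -- η = i_I(id) is a unit for m:
      (∀ u : U, m (i (𝟙_ C) LinearMap.id ⊗ₜ[k] u) = u) ∧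
      (∀ u : U, m (u ⊗ₜ[k] i (𝟙_ C) LinearMap.id) = u) ∧
      -- m and η are coalgebra maps, i.e. (U, Δ, ε, m, η) is a bialgebra:
      (Δ ∘ₗ m = (TensorProduct.map m m) ∘ₗ
          (tensorTensorTensorComm k U U U U).toLinearMap ∘ₗ (TensorProduct.map Δ Δ)) ∧
      (ε ∘ₗ m = (TensorProduct.lid k k).toLinearMap ∘ₗ TensorProduct.map ε ε) ∧
      (Δ (i (𝟙_ C) LinearMap.id)
        = i (𝟙_ C) LinearMap.id ⊗ₜ[k] i (𝟙_ C) LinearMap.id) ∧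
      (ε (i (𝟙_ C) LinearMap.id) = 1) := by
  have : ∀ X, Module.Finite k (F.obj X) := hfd
  obtain ⟨m, hm⟩ := hreal.exists_mul
  exact ⟨m, hm, hreal.mul_assoc hm, hreal.mul_unit_tmul hm, hreal.mul_tmul_unit hm,
    hreal.comul_comp_mul hm hΔ, hreal.counit_comp_mul hm hε, comul_apply_id_tensorUnit hΔ,
    counit_apply_id_tensorUnit hε⟩
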